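/- In the setting of the previous bijection: if Λ' is a vertex lattice in L₀^♯ containing p⁻¹x₀, then Λ' = (Λ' ∩ L₀) ⊕ ℤ_p(p⁻¹x₀). Concretely, every v' ∈ Λ' written as v' = v + a·(p⁻¹x₀) with v ∈ L₀ and a ∈ ℚ_p automatically has a ∈ ℤ_p. -/

import Mathlib

/-- The dual lattice of a `ℤ_p`-lattice `Λ` inside the `ℚ_p`-subspace `L` of `W`,
with respect to the bilinear form `[v,w] = polar Q v w`:
`Λ^∨ = {v ∈ L : [v, Λ] ⊆ ℤ_p}`. -/
noncomputable def dualLattice {p : ℕ} [Fact p.Prime] {W : Type*} [AddCommGroup W]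
    [Module ℚ_[p] W] [Module ℤ_[p] W] [IsScalarTower ℤ_[p] ℚ_[p] W]
    (Q : QuadraticForm ℚ_[p] W) (L : Submodule ℚ_[p] W) (Λ : Submodule ℤ_[p] W) :
    Submodule ℤ_[p] W :=
  L.restrictScalars ℤ_[p] ⊓
    ⨅ w ∈ Λ, Submodule.comap
      (((QuadraticMap.polarBilin Q).flip w).restrictScalars ℤ_[p])
      (1 : Submodule ℤ_[p] ℚ_[p])

/-- `Λ` is a vertex lattice in the subspace `L`: a full `ℤ_p`-lattice in `L` with
`pΛ ⊆ Λ^∨ ⊆ Λ` (duals taken inside `L`). -/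
def IsVertexLattice {p : ℕ} [Fact p.Prime] {W : Type*} [AddCommGroup W]
    [Module ℚ_[p] W] [Module ℤ_[p] W] [IsScalarTower ℤ_[p] ℚ_[p] W]
    (Q : QuadraticForm ℚ_[p] W) (L : Submodule ℚ_[p] W) (Λ : Submodule ℤ_[p] W) : Prop :=
  (Λ : Set W) ⊆ (L : Set W) ∧ Submodule.span ℚ_[p] (Λ : Set W) = L ∧
  (∀ v ∈ Λ, (p : ℤ_[p]) • v ∈ dualLattice Q L Λ) ∧ dualLattice Q L Λ ≤ Λ

/-- The orthogonal complement of `x₀` with respect to the polar form of `Q`. -/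
noncomputable def perpSpace {p : ℕ} [Fact p.Prime] {W : Type*} [AddCommGroup W]
    [Module ℚ_[p] W] (Q : QuadraticForm ℚ_[p] W) (x₀ : W) : Submodule ℚ_[p] W :=
  LinearMap.BilinForm.orthogonal (QuadraticMap.polarBilin Q) (Submodule.span ℚ_[p] {x₀})

/-!
Since `p • (p⁻¹x₀) ∈ pΛ' ⊆ Λ'^∨`, the number `p·[p⁻¹x₀, w]` is integral for every `w ∈ Λ'`.
For `v' = v + a·p⁻¹x₀` with `v ⊥ x₀` this number is `a·p·[p⁻¹x₀, p⁻¹x₀] = a·u`, a unit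
multiple of `a`; hence `a ∈ ℤ_p` and `v = v' - a·p⁻¹x₀ ∈ Λ'`. Every `v' ∈ Λ'` has such a
decomposition, with `a = [v', x₀]/u`.
-/

open QuadraticMap

section Field

variable {K W : Type*} [Field K] [AddCommGroup W] [Module K W] {Q : QuadraticForm K W}

theorem mul_polar_inv_smul_add_smul_inv_smul {c d : K} (hc : c ≠ 0) {x v : W}
    (hx : polar Q x x = c * d) (hv : polar Q v x = 0) (a : K) :
    c * polar Q (c⁻¹ • x) (v + a • c⁻¹ • x) = a * d := by
  rw [polar_add_right, polar_smul_left, polar_comm, hv, polar_smul_right, polar_smul_left,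
    polar_smul_right, hx]
  simp only [smul_eq_mul]
  field_simp
  ring

theorem polar_sub_smul_eq_zero {x e : W} {d : K} (he : polar Q e x = d) (hd : d ≠ 0) (v : W) :
    polar Q (v - (polar Q v x / d) • e) x = 0 := by
  rw [polar_sub_left, polar_smul_left, he, smul_eq_mul, div_mul_cancel₀ _ hd, sub_self]

end Field

section Padic

variable {p : ℕ} [Fact p.Prime] {W : Type*} [AddCommGroup W] [Module ℚ_[p] W]

theorem mem_perpSpace_iff {Q : QuadraticForm ℚ_[p] W} {x₀ v : W} :
    v ∈ perpSpace Q x₀ ↔ polar Q v x₀ = 0 := by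
  rw [perpSpace, LinearMap.BilinForm.orthogonal_span_singleton_eq_toLin_ker, LinearMap.mem_ker,
    polar_comm]
  rfl

variable [Module ℤ_[p] W] [IsScalarTower ℤ_[p] ℚ_[p] W]

theorem Submodule.smul_mem_of_norm_le_one (Λ : Submodule ℤ_[p] W) {a : ℚ_[p]} (ha : ‖a‖ ≤ 1)
    {x : W} (hx : x ∈ Λ) : a • x ∈ Λ :=
  algebraMap_smul (R := ℤ_[p]) ℚ_[p] ⟨a, ha⟩ x ▸ Λ.smul_mem _ hx

variable {Q : QuadraticForm ℚ_[p] W} {L : Submodule ℚ_[p] W} {Λ : Submodule ℤ_[p] W}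

theorem norm_polar_le_one_of_mem_dualLattice {v w : W} (hv : v ∈ dualLattice Q L Λ)
    (hw : w ∈ Λ) : ‖polar Q v w‖ ≤ 1 := by
  simp only [dualLattice, Submodule.mem_inf, Submodule.mem_iInf] at hv
  obtain ⟨y, hy⟩ := Submodule.mem_one.mp (hv.2 w hw)
  simp only [LinearMap.coe_restrictScalars, LinearMap.flip_apply, polarBilin_apply_apply,
    PadicInt.algebraMap_apply] at hy
  rw [← hy, ← PadicInt.norm_def]
  exact PadicInt.norm_le_one y

theorem IsVertexLattice.norm_natCast_mul_polar_le_one (hΛ : IsVertexLattice Q L Λ) {v w : W}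
    (hv : v ∈ Λ) (hw : w ∈ Λ) : ‖(p : ℚ_[p]) * polar Q v w‖ ≤ 1 := by
  have h := norm_polar_le_one_of_mem_dualLattice (hΛ.2.2.1 v hv) hw
  rwa [Nat.cast_smul_eq_nsmul, ← Nat.cast_smul_eq_nsmul ℚ_[p], polar_smul_left,
    smul_eq_mul] at h

theorem IsVertexLattice.norm_le_one_and_mem_of_eq_add_smul (hΛ : IsVertexLattice Q L Λ)
    {x₀ : W} {u : ℤ_[p]ˣ} (hx₀ : polar Q x₀ x₀ = (p : ℚ_[p]) * ((u : ℤ_[p]) : ℚ_[p]))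
    (hx : (p : ℚ_[p])⁻¹ • x₀ ∈ Λ) {v' v : W} {a : ℚ_[p]} (hv' : v' ∈ Λ)
    (hv : polar Q v x₀ = 0) (h : v' = v + a • (p : ℚ_[p])⁻¹ • x₀) : ‖a‖ ≤ 1 ∧ v ∈ Λ := by
  have hp : (p : ℚ_[p]) ≠ 0 := Nat.cast_ne_zero.mpr (Fact.out : p.Prime).ne_zero
  have ha := hΛ.norm_natCast_mul_polar_le_one hx hv'
  rw [h, mul_polar_inv_smul_add_smul_inv_smul hp hx₀ hv, norm_mul, ← PadicInt.norm_def,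
    PadicInt.norm_units, mul_one] at ha
  refine ⟨ha, ?_⟩
  rw [eq_sub_of_add_eq h.symm]
  exact Λ.sub_mem hv' (Λ.smul_mem_of_norm_le_one ha hx)

end Padic

theorem stmt_7_general (p : ℕ) [Fact p.Prime]
    (W : Type*) [AddCommGroup W] [Module ℚ_[p] W] [Module ℤ_[p] W]
    [IsScalarTower ℤ_[p] ℚ_[p] W]
    (Q : QuadraticForm ℚ_[p] W)
    (x₀ : W) (u : ℤ_[p]ˣ)
    (hx₀ : QuadraticMap.polar Q x₀ x₀ = (p : ℚ_[p]) * ((u : ℤ_[p]) : ℚ_[p]))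
    (Λ' : Submodule ℤ_[p] W) (hΛ' : IsVertexLattice Q ⊤ Λ')
    (hx : (p : ℚ_[p])⁻¹ • x₀ ∈ Λ') :
    Λ' = (Λ' ⊓ (perpSpace Q x₀).restrictScalars ℤ_[p]) ⊔
        Submodule.span ℤ_[p] {(p : ℚ_[p])⁻¹ • x₀} ∧
    ∀ v' ∈ Λ', ∀ (v : W) (a : ℚ_[p]), QuadraticMap.polar Q v x₀ = 0 →
      v' = v + a • ((p : ℚ_[p])⁻¹ • x₀) → ‖a‖ ≤ 1 ∧ v ∈ Λ' := by
  set e := (p : ℚ_[p])⁻¹ • x₀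
  refine ⟨le_antisymm (fun v' hv' => ?_) (sup_le inf_le_left ?_),
    fun v' hv' v a hv h => hΛ'.norm_le_one_and_mem_of_eq_add_smul hx₀ hx hv' hv h⟩
  · have hp : (p : ℚ_[p]) ≠ 0 := Nat.cast_ne_zero.mpr (Fact.out : p.Prime).ne_zero
    have hex : polar Q e x₀ = ((u : ℤ_[p]) : ℚ_[p]) := by
      rw [polar_smul_left, hx₀, smul_eq_mul, inv_mul_cancel_left₀ hp]
    set a := polar Q v' x₀ / ((u : ℤ_[p]) : ℚ_[p])
    have hv := polar_sub_smul_eq_zero hex (by simp) v'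
    obtain ⟨ha, hmem⟩ := hΛ'.norm_le_one_and_mem_of_eq_add_smul hx₀ hx hv' hv
      (sub_add_cancel v' (a • e)).symm
    rw [← sub_add_cancel v' (a • e)]
    exact Submodule.add_mem_sup ⟨hmem, mem_perpSpace_iff.mpr hv⟩
      (Submodule.smul_mem_of_norm_le_one _ ha (Submodule.mem_span_singleton_self e))
  · rwa [Submodule.span_le, Set.singleton_subset_iff]

/-- If `Λ'` is a vertex lattice in `L₀^♯ = W` containing `p⁻¹x₀`
(where `[x₀,x₀] = p·u`, `u ∈ ℤ_p^×`), then `Λ' = (Λ' ∩ L₀) ⊕ ℤ_p(p⁻¹x₀)`; concretely,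
whenever `v' ∈ Λ'` is written as `v' = v + a • (p⁻¹x₀)` with `v ∈ L₀ = x₀^⊥` and
`a ∈ ℚ_p`, automatically `a ∈ ℤ_p` (i.e. `‖a‖ ≤ 1`) and `v ∈ Λ'`. -/
theorem stmt_7 (p : ℕ) [Fact p.Prime] (hp : p ≠ 2)
    (W : Type*) [AddCommGroup W] [Module ℚ_[p] W] [Module ℤ_[p] W]
    [IsScalarTower ℤ_[p] ℚ_[p] W] [FiniteDimensional ℚ_[p] W]
    (Q : QuadraticForm ℚ_[p] W) (hQ : (QuadraticMap.polarBilin Q).Nondegenerate)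
    (x₀ : W) (u : ℤ_[p]ˣ)
    (hx₀ : QuadraticMap.polar Q x₀ x₀ = (p : ℚ_[p]) * ((u : ℤ_[p]) : ℚ_[p]))
    (Λ' : Submodule ℤ_[p] W) (hΛ' : IsVertexLattice Q ⊤ Λ')
    (hx : (p : ℚ_[p])⁻¹ • x₀ ∈ Λ') :
    Λ' = (Λ' ⊓ (perpSpace Q x₀).restrictScalars ℤ_[p]) ⊔
        Submodule.span ℤ_[p] {(p : ℚ_[p])⁻¹ • x₀} ∧
    ∀ v' ∈ Λ', ∀ (v : W) (a : ℚ_[p]), QuadraticMap.polar Q v x₀ = 0 →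
      v' = v + a • ((p : ℚ_[p])⁻¹ • x₀) → ‖a‖ ≤ 1 ∧ v ∈ Λ' :=
  stmt_7_general p W Q x₀ u hx₀ Λ' hΛ' hx
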